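/- Let B be an n×n matrix with zero diagonal, and let p ≥ 1. Let R_ρ and R_ρ' be independent random diagonal matrices, each with i.i.d. Bernoulli(ρ) diagonal entries. Then (E ‖R_ρ B R_ρ‖^p)^{1/p} ≤ 20 (E ‖R_ρ B R_ρ'‖^p)^{1/p}. -/

import Mathlib

open scoped BigOperators

/-- Spectral norm: operator norm of a matrix as a map `ℓ₂ⁿ → ℓ₂ᵐ`. -/
noncomputable def specNorm {m n : ℕ} (A : Matrix (Fin m) (Fin n) ℂ) : ℝ :=
  ‖LinearMap.toContinuousLinearMap (Matrix.toEuclideanLin A)‖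

/-- Maximum Euclidean column norm, i.e. the `ℓ₁ → ℓ₂` operator norm. -/
noncomputable def colNorm {m n : ℕ} (A : Matrix (Fin m) (Fin n) ℂ) : ℝ :=
  ⨆ j, Real.sqrt (∑ i, ‖A i j‖ ^ 2)

/-- The diagonal 0–1 projector onto the coordinates in `s`. -/
def projOf {n : ℕ} (s : Finset (Fin n)) : Matrix (Fin n) (Fin n) ℂ :=
  Matrix.diagonal fun i => if i ∈ s then 1 else 0

/-- Diagonal 0–1 matrix determined by a boolean vector. -/
def bernM {n : ℕ} (f : Fin n → Bool) : Matrix (Fin n) (Fin n) ℂ :=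
  Matrix.diagonal fun i => if f i then 1 else 0

/-- Probability weight of the outcome `f` for i.i.d. Bernoulli(ρ) selectors. -/
noncomputable def bw {n : ℕ} (ρ : ℝ) (f : Fin n → Bool) : ℝ :=
  ∏ i, if f i then ρ else 1 - ρ

/-! For a hollow matrix `A` and a uniformly random `δ`, the entry `(i, j)` with `i ≠ j` survives in
`R_δ A R_{δᶜ}` with probability `1/4`, so `A = 4 𝔼_δ R_δ A R_{δᶜ}`. Applied to `A = R_f B R_f`,
the triangle inequality and Jensen give `‖R_f B R_f‖ ^ p ≤ 4 ^ p 𝔼_δ ‖R_{δ ⊓ f} B R_{δᶜ ⊓ f}‖ ^ p`.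
For fixed `δ`, the selectors `δ ⊓ f` and `δᶜ ⊓ f` read disjoint coordinates of `f`, so replacing
`f` by an independent copy `g` in the second one does not change the law; and compressing
`R_f B R_g` by the diagonal projections `R_δ`, `R_{δᶜ}` does not increase its norm. This gives
the inequality with the constant `4`. -/

open Finset
open scoped Matrix.Norms.L2Operator

lemma specNorm_eq_norm {m n : ℕ} (A : Matrix (Fin m) (Fin n) ℂ) : specNorm A = ‖A‖ :=
  (Matrix.l2_opNorm_def A).symm

variable {n : ℕ}

lemma bernM_inf (a b : Fin n → Bool) : bernM (a ⊓ b) = bernM a * bernM b := by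
  simp only [bernM, Matrix.diagonal_mul_diagonal]
  congr 1
  ext i
  by_cases ha : a i <;> by_cases hb : b i <;> simp [ha, hb]

lemma bernM_inf_mul_mul_bernM_inf (a b a' b' : Fin n → Bool) (A : Matrix (Fin n) (Fin n) ℂ) :
    bernM (a ⊓ b) * A * bernM (a' ⊓ b') = bernM a * (bernM b * A * bernM b') * bernM a' := by
  rw [inf_comm a', bernM_inf, bernM_inf]
  simp only [mul_assoc]

lemma bernM_mul_mul_bernM_apply (a b : Fin n → Bool) (A : Matrix (Fin n) (Fin n) ℂ)
    (i j : Fin n) :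
    (bernM a * A * bernM b) i j = (if a i then 1 else 0) * A i j * (if b j then 1 else 0) := by
  simp only [bernM, Matrix.mul_diagonal, Matrix.diagonal_mul]

lemma norm_bernM_le_one (a : Fin n → Bool) : ‖bernM a‖ ≤ 1 := by
  rw [bernM, Matrix.l2_opNorm_diagonal, pi_norm_le_iff_of_nonneg zero_le_one]
  intro i
  split <;> simp

lemma norm_bernM_mul_mul_bernM_le (a b : Fin n → Bool) (A : Matrix (Fin n) (Fin n) ℂ) :
    ‖bernM a * A * bernM b‖ ≤ ‖A‖ :=
  calc ‖bernM a * A * bernM b‖ ≤ ‖bernM a‖ * ‖A‖ * ‖bernM b‖ := norm_mul₃_le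
    _ ≤ 1 * ‖A‖ * 1 := by gcongr <;> exact norm_bernM_le_one _
    _ = ‖A‖ := by ring

lemma bw_nonneg {ρ : ℝ} (h₀ : 0 ≤ ρ) (h₁ : ρ ≤ 1) (f : Fin n → Bool) : 0 ≤ bw ρ f :=
  prod_nonneg fun i _ => by split <;> linarith

lemma sum_bw_mul_prod (ρ : ℝ) (g : Fin n → Bool → ℝ) :
    ∑ δ, bw ρ δ * ∏ k, g k (δ k) = ∏ k, (ρ * g k true + (1 - ρ) * g k false) :=
  calc ∑ δ, bw ρ δ * ∏ k, g k (δ k)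
      = ∑ δ : Fin n → Bool, ∏ k, (if δ k then ρ else 1 - ρ) * g k (δ k) := by
        simp only [bw, prod_mul_distrib]
    _ = ∏ k, ∑ b, (if b then ρ else 1 - ρ) * g k b :=
        (Fintype.prod_sum fun k b => (if b then ρ else 1 - ρ) * g k b).symm
    _ = _ := by simp

lemma sum_bw_eq_one (ρ : ℝ) : ∑ f : Fin n → Bool, bw ρ f = 1 := by
  simpa using sum_bw_mul_prod (n := n) ρ fun _ _ => 1

lemma sum_bw_mul_ite_mul_ite {i j : Fin n} (hij : i ≠ j) (ρ : ℝ) :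
    ∑ δ, bw ρ δ * ((if δ i then 1 else 0) * (if δ j then 0 else 1)) = ρ * (1 - ρ) := by
  let g : Fin n → Bool → ℝ := fun k b =>
    if k = i then (if b then 1 else 0) else if k = j then (if b then 0 else 1) else 1
  have hg : ∀ δ : Fin n → Bool,
      ∏ k, g k (δ k) = (if δ i then 1 else 0) * (if δ j then 0 else 1) := by
    intro δ
    rw [prod_eq_mul i j hij (fun k _ hk => by simp [g, hk.1, hk.2]) (by simp) (by simp)]
    simp [g, hij.symm]
  simp_rw [← hg, sum_bw_mul_prod]
  rw [prod_eq_mul i j hij (fun k _ hk => by simp [g, hk.1, hk.2]) (by simp) (by simp)]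
  simp [g, hij.symm]

/-- The involution `(f, g) ↦ (δ ⊓ f ⊔ δᶜ ⊓ g, δ ⊓ g ⊔ δᶜ ⊓ f)` preserves the product weight. -/
lemma sum_bw_mul_inf_inf_compl (ρ : ℝ) (δ : Fin n → Bool)
    (F : (Fin n → Bool) → (Fin n → Bool) → ℝ) :
    ∑ f, bw ρ f * F (δ ⊓ f) (δᶜ ⊓ f) = ∑ f, ∑ g, bw ρ f * bw ρ g * F (δ ⊓ f) (δᶜ ⊓ g) := by
  let σ : (Fin n → Bool) × (Fin n → Bool) → (Fin n → Bool) × (Fin n → Bool) :=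
    fun fg => (δ ⊓ fg.1 ⊔ δᶜ ⊓ fg.2, δ ⊓ fg.2 ⊔ δᶜ ⊓ fg.1)
  have hσ : Function.Involutive σ := fun fg => by
    ext i <;> simp only [σ, Pi.inf_apply, Pi.sup_apply, Pi.compl_apply] <;> cases δ i <;> simp
  have hbw : ∀ fg, bw ρ (σ fg).1 * bw ρ (σ fg).2 = bw ρ fg.1 * bw ρ fg.2 := fun fg => by
    simp only [bw, ← prod_mul_distrib]
    refine prod_congr rfl fun i _ => ?_
    by_cases h : δ i <;> simp [σ, h, mul_comm]
  have hF : ∀ fg, F (δ ⊓ (σ fg).1) (δᶜ ⊓ (σ fg).1) = F (δ ⊓ fg.1) (δᶜ ⊓ fg.2) := fun fg => by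
    congr 1 <;> ext i <;> simp only [σ, Pi.inf_apply, Pi.sup_apply, Pi.compl_apply] <;>
      cases δ i <;> simp
  calc ∑ f, bw ρ f * F (δ ⊓ f) (δᶜ ⊓ f)
      = ∑ f, ∑ g, bw ρ f * bw ρ g * F (δ ⊓ f) (δᶜ ⊓ f) := by
        refine sum_congr rfl fun f _ => ?_
        rw [← sum_mul, ← mul_sum, sum_bw_eq_one, mul_one]
    _ = ∑ fg, bw ρ (σ fg).1 * bw ρ (σ fg).2 * F (δ ⊓ (σ fg).1) (δᶜ ⊓ (σ fg).1) := by
        rw [← Fintype.sum_prod_type']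
        exact (Equiv.sum_comp hσ.toPerm
          fun fg => bw ρ fg.1 * bw ρ fg.2 * F (δ ⊓ fg.1) (δᶜ ⊓ fg.1)).symm
    _ = _ := by
        simp only [hbw, hF]
        exact Fintype.sum_prod_type' fun f g => bw ρ f * bw ρ g * F (δ ⊓ f) (δᶜ ⊓ g)

variable {A : Matrix (Fin n) (Fin n) ℂ}

lemma eq_sum_bw_smul_bernM_mul_mul_bernM_compl (hA : ∀ i, A i i = 0) :
    A = ∑ δ, ((4 * bw (1 / 2) δ : ℝ) : ℂ) • (bernM δ * A * bernM δᶜ) := by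
  ext i j
  simp only [Matrix.sum_apply, Matrix.smul_apply, bernM_mul_mul_bernM_apply, smul_eq_mul]
  by_cases hij : i = j
  · subst hij
    simp [hA]
  calc A i j
      = ((4 * ∑ δ, bw (1 / 2) δ * ((if δ i then 1 else 0) * (if δ j then 0 else 1)) : ℝ) : ℂ)
          * A i j := by
        rw [sum_bw_mul_ite_mul_ite hij]
        norm_num
    _ = _ := by
        push_cast
        rw [mul_sum, sum_mul]
        refine sum_congr rfl fun δ _ => ?_
        by_cases hi : δ i <;> by_cases hj : δ j <;> simp [hi, hj]

lemma norm_le_sum_bw_mul_norm_bernM_mul_mul_bernM_compl (hA : ∀ i, A i i = 0) :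
    ‖A‖ ≤ ∑ δ, bw (1 / 2) δ * (4 * ‖bernM δ * A * bernM δᶜ‖) := by
  conv_lhs => rw [eq_sum_bw_smul_bernM_mul_mul_bernM_compl hA]
  refine (norm_sum_le _ _).trans_eq (sum_congr rfl fun δ _ => ?_)
  have hw : 0 ≤ 4 * bw (1 / 2) δ :=
    mul_nonneg (by norm_num) (bw_nonneg (by norm_num) (by norm_num) δ)
  rw [norm_smul, Complex.norm_of_nonneg hw]
  ring

lemma norm_rpow_le_sum_bw_mul_norm_bernM_mul_mul_bernM_compl (hA : ∀ i, A i i = 0) {p : ℝ}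
    (hp : 1 ≤ p) :
    ‖A‖ ^ p ≤ 4 ^ p * ∑ δ, bw (1 / 2) δ * ‖bernM δ * A * bernM δᶜ‖ ^ p :=
  calc ‖A‖ ^ p
      ≤ (∑ δ, bw (1 / 2) δ * (4 * ‖bernM δ * A * bernM δᶜ‖)) ^ p :=
        Real.rpow_le_rpow (norm_nonneg _) (norm_le_sum_bw_mul_norm_bernM_mul_mul_bernM_compl hA)
          (by linarith)
    _ ≤ ∑ δ, bw (1 / 2) δ * (4 * ‖bernM δ * A * bernM δᶜ‖) ^ p :=
        Real.rpow_arith_mean_le_arith_mean_rpow _ _ _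
          (fun δ _ => bw_nonneg (by norm_num) (by norm_num) δ) (sum_bw_eq_one _)
          (fun δ _ => by positivity) hp
    _ = _ := by
        rw [mul_sum]
        refine sum_congr rfl fun δ _ => ?_
        rw [Real.mul_rpow (by norm_num) (norm_nonneg _)]
        ring

lemma sum_bw_mul_norm_rpow_le (hA : ∀ i, A i i = 0) {ρ : ℝ} (h₀ : 0 ≤ ρ) (h₁ : ρ ≤ 1)
    {p : ℝ} (hp : 1 ≤ p) :
    ∑ f, bw ρ f * ‖bernM f * A * bernM f‖ ^ p
      ≤ 4 ^ p * ∑ f, ∑ g, bw ρ f * bw ρ g * ‖bernM f * A * bernM g‖ ^ p := by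
  set S := ∑ f, ∑ g, bw ρ f * bw ρ g * ‖bernM f * A * bernM g‖ ^ p
  have hbw : ∀ f : Fin n → Bool, 0 ≤ bw ρ f := bw_nonneg h₀ h₁
  have hδ : ∀ δ, ∑ f, bw ρ f * ‖bernM δ * (bernM f * A * bernM f) * bernM δᶜ‖ ^ p ≤ S := by
    intro δ
    simp only [← bernM_inf_mul_mul_bernM_inf]
    rw [sum_bw_mul_inf_inf_compl ρ δ fun a b => ‖bernM a * A * bernM b‖ ^ p]
    refine sum_le_sum fun f _ => sum_le_sum fun g _ => ?_
    gcongr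
    · exact mul_nonneg (hbw f) (hbw g)
    rw [bernM_inf_mul_mul_bernM_inf]
    exact norm_bernM_mul_mul_bernM_le _ _ _
  have hhollow : ∀ (f : Fin n → Bool) (i : Fin n), (bernM f * A * bernM f) i i = 0 :=
    fun f i => by simp [bernM_mul_mul_bernM_apply, hA]
  calc ∑ f, bw ρ f * ‖bernM f * A * bernM f‖ ^ p
      ≤ ∑ f, bw ρ f * (4 ^ p *
          ∑ δ, bw (1 / 2) δ * ‖bernM δ * (bernM f * A * bernM f) * bernM δᶜ‖ ^ p) := by
        gcongr with f _
        · exact hbw f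
        exact norm_rpow_le_sum_bw_mul_norm_bernM_mul_mul_bernM_compl (hhollow f) hp
    _ = 4 ^ p * ∑ δ, bw (1 / 2) δ *
          ∑ f, bw ρ f * ‖bernM δ * (bernM f * A * bernM f) * bernM δᶜ‖ ^ p := by
        simp_rw [mul_sum]
        rw [sum_comm]
        refine sum_congr rfl fun δ _ => sum_congr rfl fun f _ => ?_
        ring
    _ ≤ 4 ^ p * ∑ δ, bw (1 / 2) δ * S := by
        gcongr with δ _
        · exact bw_nonneg (by norm_num) (by norm_num) δ
        exact hδ δ
    _ = 4 ^ p * S := by rw [← sum_mul, sum_bw_eq_one, one_mul]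

/-- Bourgain–Tzafriri decoupling inequality for hollow matrices. -/
theorem decoupling (n : ℕ) (B : Matrix (Fin n) (Fin n) ℂ) (hB : ∀ i, B i i = 0)
    (ρ : ℝ) (hρ : ρ ∈ Set.Ioo (0:ℝ) 1) (p : ℝ) (hp : 1 ≤ p) :
    (∑ f : Fin n → Bool, bw ρ f * specNorm (bernM f * B * bernM f) ^ p) ^ (1/p)
      ≤ 20 * (∑ f : Fin n → Bool, ∑ g : Fin n → Bool,
            bw ρ f * bw ρ g * specNorm (bernM f * B * bernM g) ^ p) ^ (1/p) := by
  have hbw : ∀ f : Fin n → Bool, 0 ≤ bw ρ f := bw_nonneg hρ.1.le hρ.2.le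
  have hp₀ : 0 < p := by linarith
  simp only [specNorm_eq_norm]
  set S := ∑ f, ∑ g, bw ρ f * bw ρ g * ‖bernM f * B * bernM g‖ ^ p
  have hS : 0 ≤ S := sum_nonneg fun f _ => sum_nonneg fun g _ =>
    mul_nonneg (mul_nonneg (hbw f) (hbw g)) (by positivity)
  calc (∑ f, bw ρ f * ‖bernM f * B * bernM f‖ ^ p) ^ (1 / p)
      ≤ (4 ^ p * S) ^ (1 / p) :=
        Real.rpow_le_rpow (sum_nonneg fun f _ => mul_nonneg (hbw f) (by positivity))
          (sum_bw_mul_norm_rpow_le hB hρ.1.le hρ.2.le hp) (by positivity)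
    _ = 4 * S ^ (1 / p) := by
        rw [Real.mul_rpow (by positivity) hS, ← Real.rpow_mul (by norm_num),
          mul_one_div_cancel hp₀.ne', Real.rpow_one]
    _ ≤ 20 * S ^ (1 / p) := by gcongr; norm_num
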